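/- (Reformulation of the ≪²-basis theorem via jump inversion.) Let θ(X, Y) be an arithmetical predicate of two sets. The following are equivalent: (i) for all sets X and Z with X' ≪ Z', there exists a set Y with Y ≤_T Z' such that θ(X, Y) holds and (X ⊕ Y)' ≪ Z'; (ii) for all sets A and C with A' ≪ C, there exists a set B such that θ(A, B) holds and (A ⊕ B)' ≪ C. -/

import Mathlib

/-!
Common computability-theoretic notions (relative to an oracle), formalized from scratch:
oracle machine codes, relative computability, Turing reducibility, the Turing jump,
the recursive join, binary trees, and the relation `A ≪ B` ("every infinite
`A`-computable binary tree has an infinite path computable from `B`").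
-/

namespace ArxivLL

/-- Oracle machine codes: `Nat.Partrec.Code` together with an `oracle` instruction. -/
inductive OCode : Type
  | zero : OCode
  | succ : OCode
  | left : OCode
  | right : OCode
  | oracle : OCode
  | pair : OCode → OCode → OCode
  | comp : OCode → OCode → OCode
  | prec : OCode → OCode → OCode
  | rfind' : OCode → OCode

/-- Evaluation of an oracle machine code relative to a (total) oracle `O : ℕ → ℕ`. -/
def evalo (O : ℕ → ℕ) : OCode → ℕ →. ℕ
  | .zero => pure 0
  | .succ => fun n => Part.some (n + 1)
  | .left => fun n => Part.some n.unpair.1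
  | .right => fun n => Part.some n.unpair.2
  | .oracle => fun n => Part.some (O n)
  | .pair cf cg => fun n => Nat.pair <$> evalo O cf n <*> evalo O cg n
  | .comp cf cg => fun n => evalo O cg n >>= evalo O cf
  | .prec cf cg =>
    Nat.unpaired fun a n =>
      n.rec (evalo O cf a) fun y IH => do
        let i ← IH
        evalo O cg (Nat.pair a (Nat.pair y i))
  | .rfind' cf =>
    Nat.unpaired fun a m =>
      (Nat.rfind fun n => (fun x => x = 0) <$> evalo O cf (Nat.pair a (n + m))).map (· + m)

/-- An (injective) numbering of oracle machine codes. -/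
def encodeOCode : OCode → ℕ
  | .zero => 0
  | .succ => 1
  | .left => 2
  | .right => 3
  | .oracle => 4
  | .pair cf cg => 4 * Nat.pair (encodeOCode cf) (encodeOCode cg) + 5
  | .comp cf cg => 4 * Nat.pair (encodeOCode cf) (encodeOCode cg) + 6
  | .prec cf cg => 4 * Nat.pair (encodeOCode cf) (encodeOCode cg) + 7
  | .rfind' cf => 4 * encodeOCode cf + 8

/-- `f : ℕ → ℕ` is (total) computable relative to the oracle `O`. -/
def RecFun (O : ℕ → ℕ) (f : ℕ → ℕ) : Prop :=
  ∃ c : OCode, ∀ n, evalo O c n = Part.some (f n)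

open Classical in
/-- The characteristic function of a set of natural numbers. -/
noncomputable def chi (A : Set ℕ) : ℕ → ℕ := fun n => if n ∈ A then 1 else 0

/-- Turing reducibility `A ≤_T B` for sets of natural numbers. -/
def TuringLE (A B : Set ℕ) : Prop := RecFun (chi B) (chi A)

/-- The recursive join `A ⊕ B = {2n : n ∈ A} ∪ {2n+1 : n ∈ B}`. -/
def join (A B : Set ℕ) : Set ℕ :=
  {n | (n % 2 = 0 ∧ n / 2 ∈ A) ∨ (n % 2 = 1 ∧ n / 2 ∈ B)}

/-- The Turing jump `A' = {⟨e, x⟩ : Φ_e^A(x)↓}`. -/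
def jump (A : Set ℕ) : Set ℕ :=
  {n | ∃ c : OCode, encodeOCode c = n.unpair.1 ∧ (evalo (chi A) c n.unpair.2).Dom}

/-- The iterated Turing jump `A^(n)`. -/
def jumpIter : ℕ → Set ℕ → Set ℕ
  | 0, A => A
  | n + 1, A => jump (jumpIter n A)

/-- A subtree of `2^{<ω}`: a set of finite binary strings closed under initial segments. -/
def IsBinTree (T : Set (List Bool)) : Prop :=
  ∀ s ∈ T, ∀ t : List Bool, t <+: s → t ∈ T

/-- The set of natural numbers coding the strings belonging to `T`. -/
def setOfStrings (T : Set (List Bool)) : Set ℕ :=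
  {n | ∃ s ∈ T, Encodable.encode s = n}

/-- `f : ℕ → Bool` is an infinite path through the tree `T`. -/
def IsPathOf (f : ℕ → Bool) (T : Set (List Bool)) : Prop :=
  ∀ n, (List.ofFn fun i : Fin n => f i) ∈ T

/-- The subset of `ℕ` determined by a `0`-`1` valued function. -/
def toSet (f : ℕ → Bool) : Set ℕ := {n | f n = true}

/-- `A ≪ B`: every infinite `A`-computable binary tree has an infinite path computable
from `B` (equivalently, `B` has PA degree relative to `A`). -/
def ll (A B : Set ℕ) : Prop :=
  ∀ T : Set (List Bool), IsBinTree T → T.Infinite → TuringLE (setOfStrings T) A →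
    ∃ f : ℕ → Bool, IsPathOf f T ∧ TuringLE (toSet f) B

/-- `θ` is an arithmetical predicate of two sets: membership is uniformly decided by
some fixed bit of a finite iterate of the jump of the join. -/
def Arithmetical (θ : Set ℕ → Set ℕ → Prop) : Prop :=
  ∃ n e : ℕ, ∀ X Y : Set ℕ, θ X Y ↔ e ∈ jumpIter n (join X Y)

/-!
(ii) ⇒ (i): apply (ii) to `X` and `C = Z'`. The `Y` it yields is computable from `Z'`, since
`Y ≤_T (X ⊕ Y)'` and `≪` implies `≤_T` (the tree of initial segments of a set is computable
from the set and has the set as its only path).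

(i) ⇒ (ii): `A' ≪ C` gives `A' ≤_T C`, so Friedberg jump inversion yields `Z` with
`Z' ≡_T C`; apply (i) to `A` and `Z`, using that `≪` is invariant under `≡_T` on the right.

Jump inversion: build `G` by finite extension. Stage `s = ⟨e, x⟩` extends the current string
`σ` to some `σ ++ τ` forcing `Φ_e^{A ⊕ G}(x)↓` if there is one (a `Σ₁(A)` question, which
`A' ≤_T C` answers; `τ` is then found by search from `A`), and then appends the bit `C(s)`.
For `Z = A ⊕ G`, membership of `s` in `Z'` is the answer to that question, so `Z' ≤_T C`.
Conversely `Z'` computes `A'`, `A` and `G`, hence the stages, and reads `C(s)` off `G`.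
Halting relative to a finite table of oracle values is primitive recursive (via `evaln`), and
by the use principle every halting oracle computation halts relative to such a table.
-/

open Nat.Partrec (Code)
open Nat.Partrec.Code (eval evaln)

/-! ### Oracle codes -/

def decodeOCode : ℕ → OCode
  | 0 => .zero
  | 1 => .succ
  | 2 => .left
  | 3 => .right
  | 4 => .oracle
  | n + 5 =>
    have : n / 4 < n + 5 := by omega
    have := Nat.unpair_left_le (n / 4)
    have := Nat.unpair_right_le (n / 4)
    match n % 4 with
    | 0 => .pair (decodeOCode (n / 4).unpair.1) (decodeOCode (n / 4).unpair.2)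
    | 1 => .comp (decodeOCode (n / 4).unpair.1) (decodeOCode (n / 4).unpair.2)
    | 2 => .prec (decodeOCode (n / 4).unpair.1) (decodeOCode (n / 4).unpair.2)
    | _ => .rfind' (decodeOCode (n / 4))

theorem decodeOCode_encodeOCode (c : OCode) : decodeOCode (encodeOCode c) = c := by
  induction c with
  | pair cf cg ihf ihg =>
    change decodeOCode (4 * _ + 5) = _
    simp [decodeOCode, ihf, ihg]
  | comp cf cg ihf ihg =>
    change decodeOCode ((4 * _ + 1) + 5) = _
    simp [decodeOCode, Nat.mul_add_div, ihf, ihg]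
  | prec cf cg ihf ihg =>
    change decodeOCode ((4 * _ + 2) + 5) = _
    simp [decodeOCode, Nat.mul_add_div, ihf, ihg]
  | rfind' cf ihf =>
    change decodeOCode ((4 * _ + 3) + 5) = _
    simp [decodeOCode, Nat.mul_add_div, ihf]
  | _ => simp [decodeOCode, encodeOCode]

theorem encodeOCode_decodeOCode (n : ℕ) : encodeOCode (decodeOCode n) = n := by
  induction n using Nat.strong_induction_on with
  | _ n ih =>
    match n with
    | 0 | 1 | 2 | 3 | 4 => simp [decodeOCode, encodeOCode]
    | n + 5 =>
      have := ih (n / 4) (by omega)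
      have := ih (n / 4).unpair.1 (by have := Nat.unpair_left_le (n / 4); omega)
      have := ih (n / 4).unpair.2 (by have := Nat.unpair_right_le (n / 4); omega)
      rcases (by omega : n % 4 = 0 ∨ n % 4 = 1 ∨ n % 4 = 2 ∨ n % 4 = 3) with h | h | h | h <;>
        simp [decodeOCode, encodeOCode, *] <;> omega

theorem mem_jump_iff {A : Set ℕ} {n : ℕ} :
    n ∈ jump A ↔ (evalo (chi A) (decodeOCode n.unpair.1) n.unpair.2).Dom := by
  refine ⟨fun ⟨c, hc, hd⟩ => ?_, fun h => ⟨_, encodeOCode_decodeOCode _, h⟩⟩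
  rwa [← hc, decodeOCode_encodeOCode]

theorem pair_mem_jump_iff {A : Set ℕ} {c : OCode} {x : ℕ} :
    Nat.pair (encodeOCode c) x ∈ jump A ↔ (evalo (chi A) c x).Dom := by
  rw [mem_jump_iff, Nat.unpair_pair, decodeOCode_encodeOCode]

/-! ### Relative computability -/

def OCode.ofCode : Code → OCode
  | .zero => .zero
  | .succ => .succ
  | .left => .left
  | .right => .right
  | .pair cf cg => .pair (ofCode cf) (ofCode cg)
  | .comp cf cg => .comp (ofCode cf) (ofCode cg)
  | .prec cf cg => .prec (ofCode cf) (ofCode cg)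
  | .rfind' cf => .rfind' (ofCode cf)

theorem evalo_ofCode (O : ℕ → ℕ) (c : Code) : evalo O (OCode.ofCode c) = eval c := by
  induction c with
  | zero | succ | left | right => rfl
  | pair _ _ ihf ihg | comp _ _ ihf ihg | prec _ _ ihf ihg =>
    simp only [OCode.ofCode, evalo, eval, ihf, ihg]; rfl
  | rfind' _ ihf => simp only [OCode.ofCode, evalo, eval, ihf]; rfl

def OCode.substOracle : OCode → OCode → OCode
  | .zero, _ => .zero
  | .succ, _ => .succ
  | .left, _ => .left
  | .right, _ => .right
  | .oracle, d => d
  | .pair cf cg, d => .pair (cf.substOracle d) (cg.substOracle d)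
  | .comp cf cg, d => .comp (cf.substOracle d) (cg.substOracle d)
  | .prec cf cg, d => .prec (cf.substOracle d) (cg.substOracle d)
  | .rfind' cf, d => .rfind' (cf.substOracle d)

theorem evalo_substOracle {O O' : ℕ → ℕ} {d : OCode}
    (hd : ∀ n, evalo O' d n = Part.some (O n)) (c : OCode) :
    evalo O' (c.substOracle d) = evalo O c := by
  induction c with
  | zero | succ | left | right => rfl
  | oracle => funext n; exact hd n
  | pair _ _ ihf ihg | comp _ _ ihf ihg | prec _ _ ihf ihg =>
    simp only [OCode.substOracle, evalo, ihf, ihg]; rfl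
  | rfind' _ ihf => simp only [OCode.substOracle, evalo, ihf]; rfl

def OCode.searchCode (c : OCode) : OCode :=
  .comp (.rfind' c) (.pair (.pair .left .right) .zero)

theorem evalo_searchCode {O f : ℕ → ℕ} {c : OCode} (hc : ∀ n, evalo O c n = Part.some (f n))
    (n : ℕ) :
    evalo O c.searchCode n = Nat.rfind fun w => Part.some (decide (f (Nat.pair n w) = 0)) := by
  simp [OCode.searchCode, evalo, Seq.seq, hc, Nat.pair_unpair, pure, PFun.pure, Part.map_id']

namespace RecFun

variable {O f g : ℕ → ℕ}

theorem of_eq (hf : RecFun O f) (h : ∀ n, f n = g n) : RecFun O g :=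
  funext h ▸ hf

theorem of_computable (hf : Computable f) (O : ℕ → ℕ) : RecFun O f := by
  obtain ⟨c, hc⟩ := Nat.Partrec.Code.exists_code.1 (Partrec.nat_iff.1 hf)
  exact ⟨.ofCode c, fun n => by rw [evalo_ofCode, hc]; rfl⟩

theorem oracle (O : ℕ → ℕ) : RecFun O O :=
  ⟨.oracle, fun _ => rfl⟩

theorem comp (hf : RecFun O f) (hg : RecFun O g) : RecFun O fun n => f (g n) := by
  obtain ⟨cf, hcf⟩ := hf
  obtain ⟨cg, hcg⟩ := hg
  exact ⟨.comp cf cg, fun n => by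
    simp only [evalo, hcg n]; exact (Part.bind_some _ _).trans (hcf _)⟩

theorem pair (hf : RecFun O f) (hg : RecFun O g) : RecFun O fun n => Nat.pair (f n) (g n) := by
  obtain ⟨cf, hcf⟩ := hf
  obtain ⟨cg, hcg⟩ := hg
  exact ⟨.pair cf cg, fun n => by simp [evalo, hcf n, hcg n, Seq.seq]⟩

theorem comp₂ {h : ℕ → ℕ → ℕ} (hh : Computable₂ h) (hf : RecFun O f)
    (hg : RecFun O g) :
    RecFun O fun n => h (f n) (g n) := by
  have hu : Computable fun m : ℕ => h m.unpair.1 m.unpair.2 :=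
    hh.comp (Computable.fst.comp Computable.unpair) (Computable.snd.comp Computable.unpair)
  exact ((of_computable hu O).comp (hf.pair hg)).of_eq fun n => by simp

theorem trans {O' : ℕ → ℕ} (hf : RecFun O f) (hO : RecFun O' O) : RecFun O' f := by
  obtain ⟨c, hc⟩ := hf
  obtain ⟨d, hd⟩ := hO
  exact ⟨c.substOracle d, fun n => by rw [evalo_substOracle hd, hc]⟩

theorem natrec (a : ℕ) (hf : RecFun O f) :
    RecFun O fun n => Nat.rec a (fun s prev => f (Nat.pair s prev)) n := by
  obtain ⟨ca, hca⟩ := of_computable (Computable.const a) O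
  obtain ⟨cf, hcf⟩ := hf
  have hrec : RecFun O fun p => Nat.rec a (fun s prev => f (Nat.pair s prev)) p.unpair.2 := by
    refine ⟨.prec ca (.comp cf .right), fun p => ?_⟩
    obtain ⟨x, n, rfl⟩ : ∃ x n, p = Nat.pair x n := ⟨_, _, (Nat.pair_unpair p).symm⟩
    simp only [Nat.unpair_pair]
    induction n with
    | zero => simpa [evalo] using hca x
    | succ m ih =>
      have hunfold : evalo O (.prec ca (.comp cf .right)) (Nat.pair x (m + 1)) =
          evalo O (.prec ca (.comp cf .right)) (Nat.pair x m) >>= fun i =>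
            evalo O (.comp cf .right) (Nat.pair x (Nat.pair m i)) := by
        simp only [evalo, Nat.unpaired, Nat.unpair_pair]
      rw [hunfold, ih]
      refine (Part.bind_some _ _).trans ?_
      simp only [evalo, Nat.unpair_pair]
      exact (Part.bind_some _ _).trans (hcf _)
  exact (hrec.comp (of_computable (Primrec₂.natPair.comp (Primrec.const 0)
    Primrec.id).to_comp O)).of_eq fun n => by simp

theorem exists_dom_iff (hf : RecFun O f) :
    ∃ c : OCode, ∀ n, (evalo O c n).Dom ↔ ∃ w, f (Nat.pair n w) = 0 := by
  obtain ⟨c, hc⟩ := hf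
  refine ⟨c.searchCode, fun n => ?_⟩
  simp only [evalo_searchCode hc]
  exact Nat.rfind_dom.trans (by simp)

theorem nat_find (hf : RecFun O f) (h : ∀ n, ∃ w, f (Nat.pair n w) = 0) :
    RecFun O fun n => Nat.find (h n) := by
  obtain ⟨c, hc⟩ := hf
  refine ⟨c.searchCode, fun n => ?_⟩
  rw [evalo_searchCode hc, Part.eq_some_iff]
  refine Nat.mem_rfind.2 ?_
  exact ⟨by simpa using Nat.find_spec (h n), fun hm => by simpa using Nat.find_min (h n) hm⟩

end RecFun

theorem TuringLE.trans {A B C : Set ℕ} (hAB : TuringLE A B) (hBC : TuringLE B C) :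
    TuringLE A C :=
  RecFun.trans hAB hBC

def initSeg {α : Type*} (f : ℕ → α) (n : ℕ) : List α := (List.range n).map f

def decodeList {α : Type*} [Encodable α] (n : ℕ) : List α := (Encodable.decode n).getD []

@[simp]
theorem decodeList_encode {α : Type*} [Encodable α] (L : List α) :
    decodeList (Encodable.encode L) = L := by
  simp [decodeList, Encodable.encodek]

theorem primrec_decodeList {α : Type*} [Primcodable α] : Primrec (decodeList (α := α)) :=
  Primrec.option_getD.comp Primrec.decode (Primrec.const [])

theorem initSeg_succ {α : Type*} (f : ℕ → α) (n : ℕ) :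
    initSeg f (n + 1) = initSeg f n ++ [f n] := by
  simp [initSeg, List.range_succ]

theorem recFun_encode_initSeg {O f : ℕ → ℕ} (hf : RecFun O f) :
    RecFun O fun u => Encodable.encode (initSeg f u) := by
  have hstep : Computable₂ fun (prev v : ℕ) => Encodable.encode (decodeList prev ++ [v]) :=
    (Primrec.encode.comp (Primrec.list_append.comp (primrec_decodeList.comp .fst)
      (Primrec.list_cons.comp .snd (.const [])))).to_comp
  refine (RecFun.natrec 0 (RecFun.comp₂ hstep (RecFun.of_computable
    (Computable.snd.comp Computable.unpair) O) (hf.comp (RecFun.of_computable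
      (Computable.fst.comp Computable.unpair) O)))).of_eq fun u => ?_
  induction u with
  | zero => rfl
  | succ u ih =>
    simp only [Nat.unpair_pair] at ih ⊢
    simp only [ih, decodeList_encode, initSeg_succ]

theorem chi_eq_one_iff {A : Set ℕ} {n : ℕ} : chi A n = 1 ↔ n ∈ A := by
  by_cases h : n ∈ A <;> simp [chi, h]

theorem RecFun.chi_of_mem_iff {O a : ℕ → ℕ} {A : Set ℕ} {q : ℕ → ℕ → Bool}
    (hq : Computable₂ q) (ha : RecFun O a) (h : ∀ n, n ∈ A ↔ q n (a n)) :
    RecFun O (chi A) := by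
  have hcond : Computable₂ fun n v => cond (q n v) 1 0 :=
    (Primrec.cond Primrec.id (.const 1) (.const 0)).to_comp.comp₂ hq
  refine (RecFun.comp₂ hcond (RecFun.of_computable Computable.id O) ha).of_eq fun n => ?_
  by_cases hn : n ∈ A
  · simp [chi, hn, (h n).1 hn]
  · simp [chi, hn, show q n (a n) = false by simpa using (h n).not.1 hn]

theorem TuringLE.of_many_one {A B : Set ℕ} {g : ℕ → ℕ} (hg : Computable g)
    (h : ∀ n, n ∈ A ↔ g n ∈ B) : TuringLE A B :=
  RecFun.chi_of_mem_iff (q := fun _ v => decide (v = 1))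
    (Primrec.eq.comp .snd (.const 1)).decide.to_comp
    ((RecFun.oracle _).comp (RecFun.of_computable hg _)) fun n => by simp [h, chi_eq_one_iff]

open Classical in
noncomputable def leastZero (f : ℕ → ℕ) (n : ℕ) : ℕ :=
  if h : ∃ w, f (Nat.pair n w) = 0 then Nat.find h else 0

theorem leastZero_spec {f : ℕ → ℕ} {n : ℕ} (h : ∃ w, f (Nat.pair n w) = 0) :
    f (Nat.pair n (leastZero f n)) = 0 := by
  rw [leastZero, dif_pos h]
  exact Nat.find_spec h

theorem recFun_leastZero {O f : ℕ → ℕ} (hf : RecFun O f)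
    (hE : RecFun O (chi {n | ∃ w, f (Nat.pair n w) = 0})) : RecFun O (leastZero f) := by
  set E := {n | ∃ w, f (Nat.pair n w) = 0}
  have hsel : Computable₂ fun v x : ℕ => if v = 1 then x else 0 :=
    (Primrec.ite (Primrec.eq.comp .fst (.const 1)) .snd (.const 0)).to_comp
  have hF := RecFun.comp₂ hsel (hE.comp (RecFun.of_computable
    (Computable.fst.comp Computable.unpair) O)) hf
  have htot (n : ℕ) :
      ∃ w, (if chi E (Nat.pair n w).unpair.1 = 1 then f (Nat.pair n w) else 0) = 0 := by
    by_cases hn : n ∈ E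
    · obtain ⟨w, hw⟩ := hn
      exact ⟨w, by simp [hw]⟩
    · exact ⟨0, by simp [chi, hn]⟩
  refine (hF.nat_find htot).of_eq fun n => ?_
  by_cases hn : ∃ w, f (Nat.pair n w) = 0
  · rw [leastZero, dif_pos hn]
    exact Nat.find_congr' fun {w} => by simp [chi_eq_one_iff.2 (show n ∈ E from hn)]
  · rw [leastZero, dif_neg hn, Nat.find_eq_zero]
    simp [chi, show n ∉ E from hn]

@[simp]
theorem cond_zero_one_eq_zero {b : Bool} : (bif b then 0 else 1 : ℕ) = 0 ↔ b = true := by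
  cases b <;> simp

theorem TuringLE.left_le_join (A B : Set ℕ) : TuringLE A (join A B) :=
  of_many_one (Primrec.nat_mul.comp (.const 2) .id).to_comp fun n => by simp [join]

theorem TuringLE.right_le_join (A B : Set ℕ) : TuringLE B (join A B) :=
  of_many_one (Primrec.succ.comp (Primrec.nat_mul.comp (.const 2) .id)).to_comp fun n => by
    simp [join, Nat.add_mod, Nat.add_div]

/-! ### Partial oracles and the use principle -/

def evalp (P : ℕ →. ℕ) : OCode → ℕ →. ℕ
  | .zero => pure 0
  | .succ => fun n => Part.some (n + 1)
  | .left => fun n => Part.some n.unpair.1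
  | .right => fun n => Part.some n.unpair.2
  | .oracle => P
  | .pair cf cg => fun n => Nat.pair <$> evalp P cf n <*> evalp P cg n
  | .comp cf cg => fun n => evalp P cg n >>= evalp P cf
  | .prec cf cg =>
    Nat.unpaired fun a n =>
      n.rec (evalp P cf a) fun y IH => do
        let i ← IH
        evalp P cg (Nat.pair a (Nat.pair y i))
  | .rfind' cf =>
    Nat.unpaired fun a m =>
      (Nat.rfind fun n => (fun x => x = 0) <$> evalp P cf (Nat.pair a (n + m))).map (· + m)

theorem evalo_eq_evalp (O : ℕ → ℕ) (c : OCode) :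
    evalo O c = evalp (O : ℕ →. ℕ) c := by
  induction c with
  | zero | succ | left | right | oracle => rfl
  | pair _ _ ihf ihg | comp _ _ ihf ihg | prec _ _ ihf ihg =>
    simp only [evalo, evalp, ihf, ihg]; rfl
  | rfind' _ ihf => simp only [evalo, evalp, ihf]; rfl

def OCode.toCode (d : Code) : OCode → Code
  | .zero => .zero
  | .succ => .succ
  | .left => .left
  | .right => .right
  | .oracle => d
  | .pair cf cg => .pair (cf.toCode d) (cg.toCode d)
  | .comp cf cg => .comp (cf.toCode d) (cg.toCode d)
  | .prec cf cg => .prec (cf.toCode d) (cg.toCode d)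
  | .rfind' cf => .rfind' (cf.toCode d)

theorem eval_toCode (d : Code) (c : OCode) : eval (c.toCode d) = evalp (eval d) c := by
  induction c with
  | zero | succ | left | right | oracle => rfl
  | pair _ _ ihf ihg | comp _ _ ihf ihg | prec _ _ ihf ihg =>
    simp only [OCode.toCode, eval, evalp, ihf, ihg]; rfl
  | rfind' _ ihf => simp only [OCode.toCode, eval, evalp, ihf]; rfl

section Mono

variable {P P' : ℕ →. ℕ}

theorem evalp_prec_apply (cf cg : OCode) (a n : ℕ) :
    evalp P (.prec cf cg) (Nat.pair a n) =
      n.rec (evalp P cf a) fun y IH => IH >>= fun i => evalp P cg (Nat.pair a (Nat.pair y i)) := by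
  simp only [evalp, Nat.unpaired, Nat.unpair_pair]

theorem mem_pfun_bind_iff {p : Part ℕ} {f : ℕ →. ℕ} {y : ℕ} :
    y ∈ p >>= f ↔ ∃ a ∈ p, y ∈ f a :=
  Part.mem_bind_iff

theorem mem_evalp_rfind'_iff {cf : OCode} {a m y : ℕ} :
    y ∈ evalp P (.rfind' cf) (Nat.pair a m) ↔ ∃ k, y = k + m ∧
      0 ∈ evalp P cf (Nat.pair a (k + m)) ∧
        ∀ j < k, ∃ z ∈ evalp P cf (Nat.pair a (j + m)), z ≠ 0 := by
  simp only [evalp, Nat.unpaired, Nat.unpair_pair, Part.map_eq_map, Part.mem_map_iff]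
  constructor
  · rintro ⟨k, hk, rfl⟩
    obtain ⟨hk0, hlt⟩ := Nat.mem_rfind.1 hk
    obtain ⟨z, hz, hz0⟩ := (Part.mem_map_iff _).1 hk0
    refine ⟨k, rfl, by simpa [of_decide_eq_true hz0] using hz, fun j hj => ?_⟩
    obtain ⟨z', hz', hz'0⟩ := (Part.mem_map_iff _).1 (hlt hj)
    exact ⟨z', hz', of_decide_eq_false hz'0⟩
  · rintro ⟨k, rfl, h0, hlt⟩
    refine ⟨k, Nat.mem_rfind.2 ⟨(Part.mem_map_iff _).2 ⟨0, h0, rfl⟩, fun hj => ?_⟩, rfl⟩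
    obtain ⟨z, hz, hz0⟩ := hlt _ hj
    exact (Part.mem_map_iff _).2 ⟨z, hz, decide_eq_false hz0⟩

theorem evalp_mono (h : ∀ n, ∀ y ∈ P n, y ∈ P' n) (c : OCode) :
    ∀ x, ∀ y ∈ evalp P c x, y ∈ evalp P' c x := by
  induction c with
  | zero | succ | left | right => exact fun _ _ hy => hy
  | oracle => exact h
  | pair cf cg ihf ihg =>
    intro x y hy
    simp only [evalp, Seq.seq, Part.map_eq_map, Part.mem_bind_iff,
      Part.mem_map_iff] at hy ⊢
    obtain ⟨_, ⟨a, ha, rfl⟩, b, hb, rfl⟩ := hy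
    exact ⟨_, ⟨a, ihf x a ha, rfl⟩, b, ihg x b hb, rfl⟩
  | comp cf cg ihf ihg =>
    intro x y hy
    simp only [evalp, mem_pfun_bind_iff] at hy ⊢
    obtain ⟨a, ha, hy⟩ := hy
    exact ⟨a, ihg x a ha, ihf a y hy⟩
  | prec cf cg ihf ihg =>
    intro x
    obtain ⟨a, n, rfl⟩ : ∃ a n, x = Nat.pair a n := ⟨_, _, (Nat.pair_unpair x).symm⟩
    simp only [evalp_prec_apply]
    induction n with
    | zero => exact ihf _
    | succ m ih =>
      intro y hy
      simp only [Part.bind_eq_bind, Part.mem_bind_iff] at hy ⊢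
      obtain ⟨i, hi, hy⟩ := hy
      exact ⟨i, ih i hi, ihg _ y hy⟩
  | rfind' cf ihf =>
    intro x
    obtain ⟨a, m, rfl⟩ : ∃ a m, x = Nat.pair a m := ⟨_, _, (Nat.pair_unpair x).symm⟩
    simp only [mem_evalp_rfind'_iff]
    rintro y ⟨k, rfl, hk, hbelow⟩
    refine ⟨k, rfl, ihf _ _ hk, fun j hj => ?_⟩
    obtain ⟨z, hz, hz0⟩ := hbelow j hj
    exact ⟨z, ihf _ _ hz, hz0⟩

end Mono

def tableOracle (L : List ℕ) : ℕ →. ℕ := fun n => Part.ofOption L[n]?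

theorem mem_tableOracle_initSeg {O : ℕ → ℕ} {u n y : ℕ} :
    y ∈ tableOracle (initSeg O u) n ↔ n < u ∧ O n = y := by
  by_cases h : n < u <;> simp [tableOracle, initSeg, h, eq_comm]

theorem mem_evalo_of_mem_evalp_initSeg {O : ℕ → ℕ} {u : ℕ} {c : OCode} {x y : ℕ}
    (h : y ∈ evalp (tableOracle (initSeg O u)) c x) : y ∈ evalo O c x := by
  rw [evalo_eq_evalp]
  refine evalp_mono (fun n z hz => ?_) c x y h
  obtain ⟨-, rfl⟩ := mem_tableOracle_initSeg.1 hz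
  exact Part.mem_some _

/-- The use principle. -/
theorem eventually_mem_evalp_initSeg {O : ℕ → ℕ} {c : OCode} {x y : ℕ}
    (h : y ∈ evalo O c x) :
    ∀ᶠ u in Filter.atTop, y ∈ evalp (tableOracle (initSeg O u)) c x := by
  rw [evalo_eq_evalp] at h
  induction c generalizing x y with
  | zero | succ | left | right => exact Filter.Eventually.of_forall fun _ => h
  | oracle =>
    exact (Filter.eventually_gt_atTop x).mono fun u hu =>
      mem_tableOracle_initSeg.2 ⟨hu, (Part.mem_some_iff.1 h).symm⟩
  | pair cf cg ihf ihg =>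
    simp only [evalp, Seq.seq, Part.map_eq_map, Part.mem_bind_iff, Part.mem_map_iff] at h ⊢
    obtain ⟨_, ⟨a, ha, rfl⟩, b, hb, rfl⟩ := h
    exact ((ihf ha).and (ihg hb)).mono fun u hu => ⟨_, ⟨a, hu.1, rfl⟩, b, hu.2, rfl⟩
  | comp cf cg ihf ihg =>
    simp only [evalp, mem_pfun_bind_iff] at h ⊢
    obtain ⟨a, ha, hy⟩ := h
    exact ((ihg ha).and (ihf hy)).mono fun u hu => ⟨a, hu⟩
  | prec cf cg ihf ihg =>
    obtain ⟨a, n, rfl⟩ : ∃ a n, x = Nat.pair a n := ⟨_, _, (Nat.pair_unpair x).symm⟩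
    simp only [evalp_prec_apply] at h ⊢
    induction n generalizing y with
    | zero => exact ihf h
    | succ m ih =>
      simp only [Part.bind_eq_bind, Part.mem_bind_iff] at h ⊢
      obtain ⟨i, hi, hy⟩ := h
      exact ((ih hi).and (ihg hy)).mono fun u hu => ⟨i, hu⟩
  | rfind' cf ihf =>
    obtain ⟨a, m, rfl⟩ : ∃ a m, x = Nat.pair a m := ⟨_, _, (Nat.pair_unpair x).symm⟩
    simp only [mem_evalp_rfind'_iff] at h ⊢
    obtain ⟨k, rfl, h0, hlt⟩ := h
    have hbelow : ∀ᶠ u in Filter.atTop, ∀ j ∈ Set.Iio k,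
        ∃ z ∈ evalp (tableOracle (initSeg O u)) cf (Nat.pair a (j + m)), z ≠ 0 := by
      refine (Filter.eventually_all_finite (Set.finite_Iio k)).2 fun j hj => ?_
      obtain ⟨z, hz, hz0⟩ := hlt j hj
      exact (ihf hz).mono fun u hu => ⟨z, hu, hz0⟩
    exact ((ihf h0).and hbelow).mono fun u hu => ⟨k, rfl, hu.1, hu.2⟩

/-! ### Halting relative to a finite oracle table -/

def tableLookup (p : ℕ) : Option ℕ :=
  (Encodable.decode (α := List ℕ) p.unpair.1).bind fun L => L[p.unpair.2]?

theorem exists_code_tableLookup : ∃ c : Code, eval c = fun p => Part.ofOption (tableLookup p) :=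
  Nat.Partrec.Code.exists_code.1 <| Partrec.nat_iff.1 <| Computable.ofOption <|
    Computable.option_bind (Computable.decode.comp (Computable.fst.comp Computable.unpair))
      (Primrec.list_getElem?.comp Primrec.snd
        (Primrec.snd.comp (Primrec.unpair.comp Primrec.fst))).to_comp

noncomputable def tableLookupCode : Code := exists_code_tableLookup.choose

theorem eval_tableLookupCode (p : ℕ) : eval tableLookupCode p = Part.ofOption (tableLookup p) :=
  congrFun exists_code_tableLookup.choose_spec p

noncomputable def tableCode (L : List ℕ) : Code :=
  tableLookupCode.comp (Code.pair (Code.const (Encodable.encode L)) Code.id)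

theorem eval_tableCode (L : List ℕ) : eval (tableCode L) = tableOracle L := by
  funext n
  have : eval (tableCode L) n = eval tableLookupCode (Nat.pair (Encodable.encode L) n) := by
    simp only [tableCode, eval, Nat.Partrec.Code.eval_const, Nat.Partrec.Code.eval_id, Seq.seq]
    simp only [Part.map_eq_map, Part.map_some, Part.bind_some]
    exact Part.bind_some _ _
  simp [this, eval_tableLookupCode, tableLookup, tableOracle]

theorem primrec_tableCode : Primrec tableCode :=
  Nat.Partrec.Code.primrec₂_comp.comp (Primrec.const tableLookupCode)
    (Nat.Partrec.Code.primrec₂_pair.comp (Nat.Partrec.Code.primrec_const.comp Primrec.encode)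
      (Primrec.const Code.id))

def toCodeStep (d : Code) (L : List Code) : Code :=
  if L.length = 0 then .zero
  else if L.length = 1 then .succ
  else if L.length = 2 then .left
  else if L.length = 3 then .right
  else if L.length = 4 then d
  else
    let p := (L.length - 5) / 4
    if (L.length - 5) % 4 = 0 then .pair (L.getD p.unpair.1 .zero) (L.getD p.unpair.2 .zero)
    else if (L.length - 5) % 4 = 1 then .comp (L.getD p.unpair.1 .zero) (L.getD p.unpair.2 .zero)
    else if (L.length - 5) % 4 = 2 then .prec (L.getD p.unpair.1 .zero) (L.getD p.unpair.2 .zero)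
    else .rfind' (L.getD p .zero)

theorem toCodeStep_spec (d : Code) (n : ℕ) :
    toCodeStep d ((List.range n).map fun i => (decodeOCode i).toCode d) =
      (decodeOCode n).toCode d := by
  have getD_eq : ∀ i < n, ((List.range n).map fun i => (decodeOCode i).toCode d).getD i .zero =
      (decodeOCode i).toCode d := fun i hi => by simp [List.getD_eq_getElem?_getD, hi]
  match n with
  | 0 | 1 | 2 | 3 | 4 => simp [toCodeStep, decodeOCode, OCode.toCode]
  | n + 5 =>
    have h1 := getD_eq (n / 4).unpair.1 (by have := Nat.unpair_left_le (n / 4); omega)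
    have h2 := getD_eq (n / 4).unpair.2 (by have := Nat.unpair_right_le (n / 4); omega)
    have h3 := getD_eq (n / 4) (by omega)
    simp only [toCodeStep, List.length_map, List.length_range, Nat.add_sub_cancel, h1, h2, h3]
    rcases (by omega : n % 4 = 0 ∨ n % 4 = 1 ∨ n % 4 = 2 ∨ n % 4 = 3) with h | h | h | h <;>
      simp [decodeOCode, OCode.toCode, h]

theorem primrec_toCodeStep : Primrec₂ toCodeStep := by
  have hlen : Primrec fun q : Code × List Code => q.2.length := Primrec.list_length.comp .snd
  have hm : Primrec fun q : Code × List Code => q.2.length - 5 :=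
    Primrec.nat_sub.comp hlen (.const 5)
  have hp : Primrec fun q : Code × List Code => (q.2.length - 5) / 4 :=
    Primrec.nat_div.comp hm (.const 4)
  have hget {i : Code × List Code → ℕ} (hi : Primrec i) :
      Primrec fun q : Code × List Code => q.2.getD (i q) .zero :=
    (Primrec.list_getD _).comp .snd hi
  have ha := hget ((Primrec.fst.comp .unpair).comp hp)
  have hb := hget ((Primrec.snd.comp .unpair).comp hp)
  have hlenEq (j : ℕ) : PrimrecPred fun q : Code × List Code => q.2.length = j :=
    Primrec.eq.comp hlen (.const j)
  have hmodEq (j : ℕ) : PrimrecPred fun q : Code × List Code => (q.2.length - 5) % 4 = j :=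
    Primrec.eq.comp (Primrec.nat_mod.comp hm (.const 4)) (.const j)
  open Nat.Partrec.Code in
  exact (Primrec.ite (hlenEq 0) (.const _) <| .ite (hlenEq 1) (.const _) <|
    .ite (hlenEq 2) (.const _) <| .ite (hlenEq 3) (.const _) <| .ite (hlenEq 4) .fst <|
    .ite (hmodEq 0) (primrec₂_pair.comp ha hb) <| .ite (hmodEq 1) (primrec₂_comp.comp ha hb) <|
    .ite (hmodEq 2) (primrec₂_prec.comp ha hb) (primrec_rfind'.comp (hget hp))).to₂

theorem primrec_toCode_decodeOCode :
    Primrec₂ fun (d : Code) (n : ℕ) => (decodeOCode n).toCode d :=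
  Primrec.nat_strong_rec _ (Primrec.option_some.comp primrec_toCodeStep).to₂
    fun d n => by rw [toCodeStep_spec]

noncomputable def tableHalts (L : List ℕ) (e x k : ℕ) : Bool :=
  (evaln k ((decodeOCode e).toCode (tableCode L)) x).isSome

theorem primrec_tableHalts :
    Primrec fun q : List ℕ × ℕ × ℕ × ℕ => tableHalts q.1 q.2.1 q.2.2.1 q.2.2.2 := by
  have hcode : Primrec fun q : List ℕ × ℕ × ℕ × ℕ =>
      (decodeOCode q.2.1).toCode (tableCode q.1) :=
    primrec_toCode_decodeOCode.comp (primrec_tableCode.comp Primrec.fst)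
      (Primrec.fst.comp Primrec.snd)
  exact Primrec.option_isSome.comp (Nat.Partrec.Code.primrec_evaln.comp
    (((Primrec.snd.comp (Primrec.snd.comp Primrec.snd)).pair hcode).pair
      (Primrec.fst.comp (Primrec.snd.comp Primrec.snd))))

theorem dom_of_tableHalts {O : ℕ → ℕ} {u e x k : ℕ} (h : tableHalts (initSeg O u) e x k) :
    (evalo O (decodeOCode e) x).Dom := by
  obtain ⟨y, hy⟩ := Option.isSome_iff_exists.1 h
  have := Nat.Partrec.Code.evaln_sound (Option.mem_def.2 hy)
  rw [eval_toCode, eval_tableCode] at this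
  exact Part.dom_iff_mem.2 ⟨y, mem_evalo_of_mem_evalp_initSeg this⟩

theorem eventually_exists_tableHalts {O : ℕ → ℕ} {e x : ℕ}
    (h : (evalo O (decodeOCode e) x).Dom) :
    ∀ᶠ u in Filter.atTop, ∃ k, tableHalts (initSeg O u) e x k := by
  obtain ⟨y, hy⟩ := Part.dom_iff_mem.1 h
  refine (eventually_mem_evalp_initSeg hy).mono fun u hu => ?_
  rw [← eval_tableCode, ← eval_toCode] at hu
  obtain ⟨k, hk⟩ := Nat.Partrec.Code.evaln_complete.1 hu
  exact ⟨k, Option.isSome_iff_exists.2 ⟨y, hk⟩⟩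

/-! ### The jump -/

theorem TuringLE.le_jump_of_dom {A W : Set ℕ} {c : OCode}
    (h : ∀ n, (evalo (chi W) c n).Dom ↔ n ∈ A) : TuringLE A (jump W) :=
  of_many_one (Primrec₂.natPair.comp (.const (encodeOCode c)) .id).to_comp
    fun n => (h n).symm.trans pair_mem_jump_iff.symm

theorem TuringLE.le_jump_of_exists {A W : Set ℕ} {f : ℕ → ℕ} (hf : RecFun (chi W) f)
    (h : ∀ n, n ∈ A ↔ ∃ w, f (Nat.pair n w) = 0) : TuringLE A (jump W) := by
  obtain ⟨c, hc⟩ := hf.exists_dom_iff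
  exact le_jump_of_dom fun n => (hc n).trans (h n).symm

theorem TuringLE.le_jump (A : Set ℕ) : TuringLE A (jump A) := by
  refine le_jump_of_exists (f := fun m => 1 - chi A m.unpair.1)
    ((RecFun.of_computable (Primrec.nat_sub.comp (.const 1) .id).to_comp _).comp
      ((RecFun.oracle _).comp (RecFun.of_computable (Computable.fst.comp Computable.unpair) _)))
    fun n => ?_
  by_cases hn : n ∈ A <;> simp [chi, hn]

/-- The search whose witnesses `⟨u, k⟩` certify `n ∈ jump A`: the computation halts within
`k` steps, querying only the first `u` bits of `A`. -/
noncomputable def jumpSearch (A : Set ℕ) (m : ℕ) : ℕ :=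
  cond (tableHalts (initSeg (chi A) m.unpair.2.unpair.1) m.unpair.1.unpair.1 m.unpair.1.unpair.2
    m.unpair.2.unpair.2) 0 1

theorem mem_jump_iff_exists_jumpSearch {A : Set ℕ} {n : ℕ} :
    n ∈ jump A ↔ ∃ w, jumpSearch A (Nat.pair n w) = 0 := by
  simp only [jumpSearch, Nat.unpair_pair, mem_jump_iff]
  constructor
  · intro h
    obtain ⟨u, k, hk⟩ := (eventually_exists_tableHalts h).exists
    exact ⟨Nat.pair u k, by simp [hk]⟩
  · rintro ⟨w, hw⟩
    exact dom_of_tableHalts (cond_zero_one_eq_zero.1 hw)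

theorem recFun_jumpSearch {O : ℕ → ℕ} {A : Set ℕ} (hA : RecFun O (chi A)) :
    RecFun O (jumpSearch A) := by
  have u1 : Primrec fun m : ℕ => m.unpair.1 := Primrec.fst.comp .unpair
  have u2 : Primrec fun m : ℕ => m.unpair.2 := Primrec.snd.comp .unpair
  have hG : Computable₂ fun (m t : ℕ) => cond (tableHalts (decodeList t) m.unpair.1.unpair.1
      m.unpair.1.unpair.2 m.unpair.2.unpair.2) 0 1 :=
    (Primrec.cond (primrec_tableHalts.comp ((primrec_decodeList.comp .snd).pair
      (((u1.comp u1).comp .fst).pair (((u2.comp u1).comp .fst).pair ((u2.comp u2).comp .fst)))))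
      (.const 0) (.const 1)).to_comp
  exact (RecFun.comp₂ hG (RecFun.of_computable Computable.id O)
    ((recFun_encode_initSeg hA).comp (RecFun.of_computable (u1.comp u2).to_comp O))).of_eq
    fun m => by simp [jumpSearch]

theorem TuringLE.jump_mono {A W : Set ℕ} (h : TuringLE A W) : TuringLE (jump A) (jump W) :=
  le_jump_of_exists (recFun_jumpSearch h) fun _ => mem_jump_iff_exists_jumpSearch

/-! ### Trees of initial segments -/

section InitSeg

variable {α : Type*} (f : ℕ → α)

@[simp]
theorem length_initSeg (n : ℕ) : (initSeg f n).length = n := by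
  simp [initSeg]

theorem ofFn_eq_initSeg (n : ℕ) : List.ofFn (fun i : Fin n => f i) = initSeg f n := by
  apply List.ext_getElem <;> simp [initSeg]

theorem take_initSeg {m n : ℕ} (h : m ≤ n) : (initSeg f n).take m = initSeg f m := by
  simp [initSeg, ← List.map_take, List.take_range, Nat.min_eq_left h]

theorem eq_initSeg_of_prefix {ρ : List α} {n : ℕ} (h : ρ <+: initSeg f n) :
    ρ = initSeg f ρ.length := by
  rw [List.prefix_iff_eq_take.1 h, take_initSeg f (by simpa using h.length_le), length_initSeg]

theorem isBinTree_range_initSeg (p : ℕ → Bool) : IsBinTree (Set.range (initSeg p)) := by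
  rintro _ ⟨n, rfl⟩ t ht
  exact ⟨t.length, (eq_initSeg_of_prefix p ht).symm⟩

theorem infinite_range_initSeg : (Set.range (initSeg f)).Infinite :=
  Set.infinite_range_of_injective fun m n h => by simpa using congrArg List.length h

theorem eq_of_isPathOf_range_initSeg {p q : ℕ → Bool} (h : IsPathOf q (Set.range (initSeg p))) :
    q = p := by
  funext i
  obtain ⟨m, hm⟩ := h (i + 1)
  rw [ofFn_eq_initSeg] at hm
  obtain rfl : m = i + 1 := by simpa using congrArg List.length hm
  simpa [initSeg] using congrArg (·[i]?) hm.symm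

end InitSeg

theorem toSet_decide_chi (X : Set ℕ) : toSet (fun i => decide (chi X i = 1)) = X := by
  ext i
  simp [toSet, chi_eq_one_iff]

theorem setOfStrings_range_initSeg_le (X : Set ℕ) :
    TuringLE (setOfStrings (Set.range (initSeg fun i => decide (chi X i = 1)))) X := by
  have hq : Computable₂ fun (n t : ℕ) =>
      decide (Encodable.encode ((decodeList t).map fun v : ℕ => decide (v = 1)) = n) :=
    (Primrec.eq.comp (Primrec.encode.comp (Primrec.list_map (primrec_decodeList.comp .snd)
      (Primrec.eq.comp .snd (.const 1)).decide.to₂)) .fst).decide.to_comp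
  have hlen : Computable fun n : ℕ => (decodeList n : List Bool).length :=
    (Primrec.list_length.comp primrec_decodeList).to_comp
  refine RecFun.chi_of_mem_iff hq
    ((recFun_encode_initSeg (RecFun.oracle (chi X))).comp (RecFun.of_computable hlen _)) fun n => ?_
  have hmap : ∀ m, (initSeg (chi X) m).map (fun v => decide (v = 1)) =
      initSeg (fun i => decide (chi X i = 1)) m := fun m => by simp [initSeg]
  simp only [setOfStrings, Set.mem_ofPred_eq, Set.exists_range_iff, decodeList_encode, hmap,
    decide_eq_true_eq]
  exact ⟨fun ⟨m, hm⟩ => by subst hm; simp, fun h => ⟨_, h⟩⟩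

theorem TuringLE.of_ll {X C : Set ℕ} (h : ll X C) : TuringLE X C := by
  obtain ⟨q, hq, hqC⟩ := h _ (isBinTree_range_initSeg _) (infinite_range_initSeg _)
    (setOfStrings_range_initSeg_le X)
  rwa [eq_of_isPathOf_range_initSeg hq, toSet_decide_chi] at hqC

theorem ll.mono_right {A B B' : Set ℕ} (h : ll A B) (hB : TuringLE B B') : ll A B' := by
  intro T hT hinf hTA
  obtain ⟨f, hf, hfB⟩ := h T hT hinf hTA
  exact ⟨f, hf, hfB.trans hB⟩

/-! ### Forcing -/

def joinTable (a : List ℕ) (ρ : List Bool) : List ℕ :=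
  initSeg (fun m => if m % 2 = 0 then a.getD (m / 2) 0 else cond (ρ.getD (m / 2) false) 1 0)
    (2 * ρ.length)

theorem primrec_joinTable : Primrec₂ joinTable := by
  have hbit : Primrec₂ fun (q : List ℕ × List Bool) (m : ℕ) =>
      if m % 2 = 0 then q.1.getD (m / 2) 0 else cond (q.2.getD (m / 2) false) 1 0 := by
    have hhalf : Primrec fun p : (List ℕ × List Bool) × ℕ => p.2 / 2 :=
      Primrec.nat_div.comp .snd (.const 2)
    exact (Primrec.ite (Primrec.eq.comp (Primrec.nat_mod.comp .snd (.const 2)) (.const 0))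
      ((Primrec.list_getD 0).comp (Primrec.fst.comp .fst) hhalf)
      (Primrec.cond ((Primrec.list_getD false).comp (Primrec.snd.comp .fst) hhalf)
        (.const 1) (.const 0))).to₂
  exact (Primrec.list_map (Primrec.list_range.comp (Primrec.nat_mul.comp (.const 2)
    (Primrec.list_length.comp .snd))) hbit).to₂

theorem joinTable_initSeg {A : Set ℕ} {g : ℕ → Bool} {ρ : List Bool}
    (hρ : ρ = initSeg g ρ.length) :
    joinTable (initSeg (chi A) ρ.length) ρ =
      initSeg (chi (join A (toSet g))) (2 * ρ.length) := by
  refine List.map_congr_left fun m hm => ?_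
  have hm2 : m / 2 < ρ.length := by simp at hm; omega
  have hgetD : ρ.getD (m / 2) false = g (m / 2) := by
    rw [hρ]; simp [initSeg, List.getD_eq_getElem?_getD, hm2]
  rcases Nat.mod_two_eq_zero_or_one m with h | h
  · by_cases hA : m / 2 ∈ A <;> simp [initSeg, List.getD_eq_getElem?_getD, hm2, h, chi, join, hA]
  · simp only [show m % 2 ≠ 0 by omega, if_false, hgetD]
    cases hg : g (m / 2) <;> simp [hg, h, chi, join, toSet]

/-- `ρ` forces the computation `s = ⟨e, x⟩` relative to `A ⊕ ρ` to halt within `k` steps. -/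
noncomputable def forces (A : Set ℕ) (s : ℕ) (ρ : List Bool) (k : ℕ) : Bool :=
  tableHalts (joinTable (initSeg (chi A) ρ.length) ρ) s.unpair.1 s.unpair.2 k

theorem dom_of_forces {A : Set ℕ} {g : ℕ → Bool} {s k : ℕ} {ρ : List Bool}
    (h : forces A s ρ k) (hρ : ρ = initSeg g ρ.length) :
    (evalo (chi (join A (toSet g))) (decodeOCode s.unpair.1) s.unpair.2).Dom := by
  rw [forces, joinTable_initSeg hρ] at h
  exact dom_of_tableHalts h

theorem exists_forces_of_dom {A : Set ℕ} {g : ℕ → Bool} {s : ℕ} {σ : List Bool}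
    (hσ : σ = initSeg g σ.length)
    (h : (evalo (chi (join A (toSet g))) (decodeOCode s.unpair.1) s.unpair.2).Dom) :
    ∃ τ k, forces A s (σ ++ τ) k := by
  obtain ⟨N, hN⟩ := Filter.eventually_atTop.1 (eventually_exists_tableHalts h)
  set L := σ.length + N
  have htake : (initSeg g L).take σ.length = σ := by
    rw [take_initSeg g (by omega), ← hσ]
  have hext : σ ++ (initSeg g L).drop σ.length = initSeg g L := by
    simpa [htake] using List.take_append_drop σ.length (initSeg g L)
  obtain ⟨k, hk⟩ := hN (2 * L) (by omega)
  refine ⟨(initSeg g L).drop σ.length, k, ?_⟩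
  rw [hext, forces, joinTable_initSeg (g := g) (by simp), length_initSeg]
  exact hk

/-- The search for witnesses `⟨⌜τ⌝, k⟩` to the question `⟨s, ⌜σ⌝⟩`: does `σ ++ τ` force `s`
within `k` steps? -/
noncomputable def forceSearch (A : Set ℕ) (m : ℕ) : ℕ :=
  cond (forces A m.unpair.1.unpair.1
    (decodeList m.unpair.1.unpair.2 ++ decodeList m.unpair.2.unpair.1) m.unpair.2.unpair.2) 0 1

@[simp]
theorem forceSearch_pair_eq_zero {A : Set ℕ} {s w : ℕ} {σ : List Bool} :
    forceSearch A (Nat.pair (Nat.pair s (Encodable.encode σ)) w) = 0 ↔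
      forces A s (σ ++ decodeList w.unpair.1) w.unpair.2 := by
  simp [forceSearch]

theorem recFun_forceSearch {O : ℕ → ℕ} {A : Set ℕ} (hA : RecFun O (chi A)) :
    RecFun O (forceSearch A) := by
  have u1 : Primrec fun m : ℕ => m.unpair.1 := Primrec.fst.comp .unpair
  have u2 : Primrec fun m : ℕ => m.unpair.2 := Primrec.snd.comp .unpair
  have hρ : Primrec fun m : ℕ =>
      (decodeList m.unpair.1.unpair.2 ++ decodeList m.unpair.2.unpair.1 : List Bool) :=
    Primrec.list_append.comp (primrec_decodeList.comp (u2.comp u1))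
      (primrec_decodeList.comp (u1.comp u2))
  have hG : Computable₂ fun (m t : ℕ) => cond (tableHalts
      (joinTable (decodeList t) (decodeList m.unpair.1.unpair.2 ++ decodeList m.unpair.2.unpair.1))
      m.unpair.1.unpair.1.unpair.1 m.unpair.1.unpair.1.unpair.2 m.unpair.2.unpair.2) 0 1 :=
    (Primrec.cond (primrec_tableHalts.comp
      ((primrec_joinTable.comp (primrec_decodeList.comp .snd) (hρ.comp .fst)).pair
        ((((u1.comp u1).comp u1).comp .fst).pair ((((u2.comp u1).comp u1).comp .fst).pair
          ((u2.comp u2).comp .fst)))))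
      (.const 0) (.const 1)).to_comp
  exact (RecFun.comp₂ hG (RecFun.of_computable Computable.id O)
    ((recFun_encode_initSeg hA).comp
      (RecFun.of_computable (Primrec.list_length.comp hρ).to_comp O))).of_eq
    fun m => by simp [forceSearch, forces]

theorem forceable_le_jump (A : Set ℕ) :
    TuringLE {m | ∃ w, forceSearch A (Nat.pair m w) = 0} (jump A) :=
  TuringLE.le_jump_of_exists (recFun_forceSearch (RecFun.oracle _)) fun _ => Iff.rfl

/-! ### Friedberg jump inversion -/

section Construction

variable (A C : Set ℕ)

noncomputable def extension (m : ℕ) : List Bool :=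
  decodeList (leastZero (forceSearch A) m).unpair.1

/-- Stage `s = ⟨e, x⟩` extends the current string, if it can, so that it forces the
computation `Φ_e^{A ⊕ G}(x)` to halt, and then appends the bit `C(s)`. -/
noncomputable def stage : ℕ → List Bool
  | 0 => []
  | s + 1 =>
    stage s ++ extension A (Nat.pair s (Encodable.encode (stage s))) ++ [decide (chi C s = 1)]

noncomputable def generic (i : ℕ) : Bool := (stage A C (i + 1)).getD i false

variable {A C}

theorem stage_prefix {s t : ℕ} (h : s ≤ t) : stage A C s <+: stage A C t := by
  induction t, h using Nat.le_induction with
  | base => exact List.prefix_refl _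
  | succ t _ ih =>
    exact ih.trans (by rw [stage, List.append_assoc]; exact List.prefix_append _ _)

theorem le_length_stage (s : ℕ) : s ≤ (stage A C s).length := by
  induction s with
  | zero => simp
  | succ s ih => simp only [stage, List.length_append, List.length_singleton]; omega

theorem stage_eq_initSeg (s : ℕ) : stage A C s = initSeg (generic A C) (stage A C s).length := by
  refine List.ext_getElem (by simp) fun i h1 _ => ?_
  have hi : i < (stage A C (i + 1)).length := lt_of_lt_of_le i.lt_succ_self (le_length_stage _)
  simp only [initSeg, List.getElem_map, List.getElem_range, generic, List.getD_eq_getElem _ _ hi]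
  rw [(stage_prefix (le_max_left s (i + 1))).getElem h1,
    (stage_prefix (le_max_right s (i + 1))).getElem hi]

theorem generic_length_extension (s : ℕ) :
    generic A C (stage A C s ++ extension A (Nat.pair s (Encodable.encode (stage A C s)))).length =
      decide (chi C s = 1) := by
  have h := congrArg
    (·[(stage A C s ++ extension A (Nat.pair s (Encodable.encode (stage A C s)))).length]?)
    (stage_eq_initSeg (A := A) (C := C) (s + 1))
  simp only [stage] at h
  simpa [initSeg] using h.symm

theorem mem_jump_generic_iff {n : ℕ} : n ∈ jump (join A (toSet (generic A C))) ↔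
    ∃ w, forceSearch A (Nat.pair (Nat.pair n (Encodable.encode (stage A C n))) w) = 0 := by
  rw [mem_jump_iff]
  constructor
  · intro h
    obtain ⟨τ, k, hk⟩ := exists_forces_of_dom (stage_eq_initSeg n) h
    exact ⟨Nat.pair (Encodable.encode τ) k, by simpa using hk⟩
  · intro h
    have hw := leastZero_spec h
    rw [forceSearch_pair_eq_zero] at hw
    have hprefix : stage A C n ++ extension A (Nat.pair n (Encodable.encode (stage A C n))) <+:
        initSeg (generic A C) (stage A C (n + 1)).length := by
      rw [← stage_eq_initSeg, stage]
      exact List.prefix_append _ _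
    exact dom_of_forces hw (eq_initSeg_of_prefix _ hprefix)

theorem recFun_encode_extension {O : ℕ → ℕ} (hJ : RecFun O (chi (jump A)))
    (hA : RecFun O (chi A)) : RecFun O fun m => Encodable.encode (extension A m) := by
  have hdec : Computable fun v : ℕ => Encodable.encode (decodeList v.unpair.1 : List Bool) :=
    (Primrec.encode.comp (primrec_decodeList.comp (Primrec.fst.comp .unpair))).to_comp
  exact (RecFun.of_computable hdec O).comp
    (recFun_leastZero (recFun_forceSearch hA) (RecFun.trans (forceable_le_jump A) hJ))

theorem recFun_encode_stage {O b : ℕ → ℕ}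
    (hext : RecFun O fun m => Encodable.encode (extension A m)) (hb : RecFun O b)
    (hbit : ∀ s, b (Nat.pair s (Encodable.encode (stage A C s))) = chi C s) :
    RecFun O fun s => Encodable.encode (stage A C s) := by
  have hstep : Computable₂ fun (m v : ℕ) => Encodable.encode
      (decodeList m.unpair.2 ++ decodeList v.unpair.1 ++ [decide (v.unpair.2 = 1)]) := by
    have u1 : Primrec fun m : ℕ => m.unpair.1 := Primrec.fst.comp .unpair
    have u2 : Primrec fun m : ℕ => m.unpair.2 := Primrec.snd.comp .unpair
    exact (Primrec.encode.comp (Primrec.list_append.comp (Primrec.list_append.comp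
      (primrec_decodeList.comp (u2.comp .fst)) (primrec_decodeList.comp (u1.comp .snd)))
      (Primrec.list_cons.comp (Primrec.eq.comp (u2.comp .snd) (.const 1)).decide
        (.const [])))).to_comp
  refine (RecFun.natrec 0 (RecFun.comp₂ hstep (RecFun.of_computable Computable.id O)
    (hext.pair hb))).of_eq fun s => ?_
  induction s with
  | zero => rfl
  | succ s ih =>
    simp only [Nat.unpair_pair, id] at ih ⊢
    rw [ih]
    simp [stage, hbit]

end Construction

theorem chi_toSet_eq {g : ℕ → Bool} {C : Set ℕ} {i s : ℕ} (h : g i = decide (chi C s = 1)) :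
    chi (toSet g) i = chi C s := by
  by_cases hs : s ∈ C <;> simp_all [chi, toSet]

theorem jump_join_generic_le {A C : Set ℕ} (hJ : TuringLE (jump A) C) :
    TuringLE (jump (join A (toSet (generic A C)))) C := by
  have hA : RecFun (chi C) (chi A) := (TuringLE.le_jump A).trans hJ
  have hstage := recFun_encode_stage (C := C) (recFun_encode_extension hJ hA)
    ((RecFun.oracle _).comp (RecFun.of_computable (Computable.fst.comp Computable.unpair) _))
    fun s => by simp
  exact RecFun.chi_of_mem_iff (q := fun _ v => decide (v = 1))
    (Primrec.eq.comp .snd (.const 1)).decide.to_comp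
    (((forceable_le_jump A).trans hJ).comp ((RecFun.of_computable Computable.id _).pair hstage))
    fun n => by simp [mem_jump_generic_iff, chi_eq_one_iff]

theorem le_jump_join_generic (A C : Set ℕ) :
    TuringLE C (jump (join A (toSet (generic A C)))) := by
  set Z := join A (toSet (generic A C))
  have hAZ : TuringLE A Z := TuringLE.left_le_join _ _
  have hext := recFun_encode_extension (TuringLE.jump_mono hAZ) (hAZ.trans (TuringLE.le_jump Z))
  set b : ℕ → ℕ := fun m => chi (toSet (generic A C))
    (decodeList m.unpair.2 ++ decodeList (Encodable.encode (extension A m)) : List Bool).length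
    with hb_def
  have hlen : Computable₂ fun (x y : ℕ) => (decodeList x ++ decodeList y : List Bool).length :=
    (Primrec.list_length.comp (Primrec.list_append.comp (primrec_decodeList.comp .fst)
      (primrec_decodeList.comp .snd))).to_comp
  have hb : RecFun (chi (jump Z)) b :=
    ((TuringLE.right_le_join A _).trans (TuringLE.le_jump Z)).comp
      (RecFun.comp₂ hlen (RecFun.of_computable (Computable.snd.comp Computable.unpair) _) hext)
  have hbit (s : ℕ) : b (Nat.pair s (Encodable.encode (stage A C s))) = chi C s := by
    simp only [hb_def, Nat.unpair_pair, decodeList_encode]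
    exact chi_toSet_eq (generic_length_extension s)
  exact (hb.comp ((RecFun.of_computable Computable.id _).pair
    (recFun_encode_stage hext hb hbit))).of_eq hbit

/-- **Friedberg jump inversion.** -/
theorem exists_jump_equiv {A C : Set ℕ} (hJ : TuringLE (jump A) C) :
    ∃ Z : Set ℕ, TuringLE (jump Z) C ∧ TuringLE C (jump Z) :=
  ⟨_, jump_join_generic_le hJ, le_jump_join_generic A C⟩

theorem rephrase_ll2_basis_general (θ : Set ℕ → Set ℕ → Prop) :
    (∀ X Z : Set ℕ, ll (jump X) (jump Z) →
        ∃ Y : Set ℕ, TuringLE Y (jump Z) ∧ θ X Y ∧ ll (jump (join X Y)) (jump Z)) ↔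
    (∀ A C : Set ℕ, ll (jump A) C →
        ∃ B : Set ℕ, θ A B ∧ ll (jump (join A B)) C) := by
  constructor
  · intro H A C hAC
    obtain ⟨Z, hZC, hCZ⟩ := exists_jump_equiv (TuringLE.of_ll hAC)
    obtain ⟨B, -, hB, hABZ⟩ := H A Z (hAC.mono_right hCZ)
    exact ⟨B, hB, hABZ.mono_right hZC⟩
  · intro H X Z hXZ
    obtain ⟨Y, hY, hXYZ⟩ := H X (jump Z) hXZ
    exact ⟨Y, ((TuringLE.right_le_join X Y).trans (TuringLE.le_jump _)).trans
      (TuringLE.of_ll hXYZ), hY, hXYZ⟩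

/-- **Reformulation of the `≪²`-basis theorem via jump inversion** (prop:rephrase,
standard-model content). For arithmetical `θ`, the `≪²`-basis theorem for
`∀X ∃Y θ(X,Y)` is equivalent to: for all `A, C` with `A' ≪ C` there is `B` with
`θ(A,B)` and `(A ⊕ B)' ≪ C`. -/
theorem rephrase_ll2_basis (θ : Set ℕ → Set ℕ → Prop) (hθ : Arithmetical θ) :
    (∀ X Z : Set ℕ, ll (jump X) (jump Z) →
        ∃ Y : Set ℕ, TuringLE Y (jump Z) ∧ θ X Y ∧ ll (jump (join X Y)) (jump Z)) ↔
    (∀ A C : Set ℕ, ll (jump A) C →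
        ∃ B : Set ℕ, θ A B ∧ ll (jump (join A B)) C) :=
  rephrase_ll2_basis_general θ

end ArxivLL
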